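/- arXiv:1910.01026 — 4 statements merged into one kernel-verified Lean document; each statement's English description precedes it below -/
import Mathlib

section
/- For smooth, compactly supported functions φ, ψ on ℝ^n, and for each pair of indices i, j, the second-order differential operators L_ij defined by L_ij ψ = −∇·( H^{p_i+p_j+1}/(p_i+p_j+1) ∇ψ − p_j/(p_i+p_j) H^{p_i+p_j} ψ ∇b ) − p_i/(p_i+p_j) H^{p_i+p_j} ∇b·∇ψ + p_i p_j/(p_i+p_j−1) H^{p_i+p_j−1}(1+|∇b|²) ψ satisfy the adjointness relation ∫_{ℝ^n} (L_ij ψ) φ dx = ∫_{ℝ^n} ψ (L_ji φ) dx; in particular each L_ii is formally self-adjoint in L²(ℝ^n). -/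
open scoped BigOperators RealInnerProductSpace
open MeasureTheory

/-- Divergence of a vector field on `ℝ^n`. -/
noncomputable def vdiv {n : ℕ} (X : EuclideanSpace ℝ (Fin n) → EuclideanSpace ℝ (Fin n))
    (x : EuclideanSpace ℝ (Fin n)) : ℝ :=
  ∑ i, fderiv ℝ (fun y => X y i) x (EuclideanSpace.single i 1)

/-- The second-order Isobe–Kakinuma operator `L_{ij}` (with `pi = p_i`, `pj = p_j`),
depending on the depth `H` and the bottom `b`; the conventions 0/0 = 0 are realized by
real division (`a / 0 = 0` in Lean) and natural subtraction in the exponents. -/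
noncomputable def Lop {n : ℕ} (H b : EuclideanSpace ℝ (Fin n) → ℝ) (pi pj : ℕ)
    (ψ : EuclideanSpace ℝ (Fin n) → ℝ) (x : EuclideanSpace ℝ (Fin n)) : ℝ :=
  - vdiv (fun y =>
      (H y ^ (pi + pj + 1) / ((pi : ℝ) + (pj : ℝ) + 1)) • gradient ψ y
      - (((pj : ℝ) / ((pi : ℝ) + (pj : ℝ))) * H y ^ (pi + pj) * ψ y) • gradient b y) x
  - ((pi : ℝ) / ((pi : ℝ) + (pj : ℝ))) * H x ^ (pi + pj) * ⟪gradient b x, gradient ψ x⟫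
  + ((pi : ℝ) * (pj : ℝ) / (((pi + pj - 1 : ℕ) : ℝ))) * H x ^ (pi + pj - 1)
      * (1 + ‖gradient b x‖ ^ 2) * ψ x

section Aux

variable {n : ℕ}

lemma contDiff_grad {f : EuclideanSpace ℝ (Fin n) → ℝ} (hf : ContDiff ℝ (⊤ : ℕ∞) f) :
    ContDiff ℝ (⊤ : ℕ∞) (gradient f) :=
  ((InnerProductSpace.toDual ℝ _).symm.contDiff).comp (hf.fderiv_right (m := (⊤ : ℕ∞)) (by simp))

lemma compsupp_grad {f : EuclideanSpace ℝ (Fin n) → ℝ} (hf : HasCompactSupport f) :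
    HasCompactSupport (gradient f) :=
  (hf.fderiv ℝ).comp_left (map_zero _)

lemma fderiv_eq_inner_grad (f : EuclideanSpace ℝ (Fin n) → ℝ) (x v : EuclideanSpace ℝ (Fin n)) :
    fderiv ℝ f x v = ⟪gradient f x, v⟫ :=
  (InnerProductSpace.toDual_symm_apply).symm

lemma cont_fderiv_apply {G : Type*} [NormedAddCommGroup G] [NormedSpace ℝ G]
    {f : EuclideanSpace ℝ (Fin n) → G} (hf : ContDiff ℝ (⊤ : ℕ∞) f) (v : EuclideanSpace ℝ (Fin n)) :
    Continuous (fun x => fderiv ℝ f x v) :=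
  ((hf.fderiv_right (m := (⊤ : ℕ∞)) (by simp)).continuous).clm_apply continuous_const

lemma cont_comp_fderiv {F : EuclideanSpace ℝ (Fin n) → EuclideanSpace ℝ (Fin n)}
    (hF : ContDiff ℝ (⊤ : ℕ∞) F) (i : Fin n) (v : EuclideanSpace ℝ (Fin n)) :
    Continuous (fun x => fderiv ℝ (fun y => F y i) x v) :=
  cont_fderiv_apply ((EuclideanSpace.proj (𝕜 := ℝ) i).contDiff.comp hF) v

lemma cont_vdiv {F : EuclideanSpace ℝ (Fin n) → EuclideanSpace ℝ (Fin n)}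
    (hF : ContDiff ℝ (⊤ : ℕ∞) F) : Continuous (vdiv F) := by
  unfold vdiv
  exact continuous_finset_sum _ fun i _ => cont_comp_fderiv hF i _

/-- Integration by parts for the divergence against a test function. -/
lemma ibp_div {F : EuclideanSpace ℝ (Fin n) → EuclideanSpace ℝ (Fin n)}
    {φ : EuclideanSpace ℝ (Fin n) → ℝ}
    (hF : ContDiff ℝ (⊤ : ℕ∞) F) (hFc : HasCompactSupport F)
    (hφ : ContDiff ℝ (⊤ : ℕ∞) φ) :
    ∫ x, vdiv F x * φ x = - ∫ x, ⟪F x, gradient φ x⟫ := by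
  have hFi : ∀ i : Fin n, ContDiff ℝ (⊤ : ℕ∞) (fun y => F y i) := fun i =>
    (EuclideanSpace.proj (𝕜 := ℝ) i).contDiff.comp hF
  have hFic : ∀ i : Fin n, HasCompactSupport (fun y => F y i) := fun i =>
    hFc.comp_left (g := fun v : EuclideanSpace ℝ (Fin n) => v i) rfl
  have hdFic : ∀ (i : Fin n) (v), HasCompactSupport
      (fun x => fderiv ℝ (fun y => F y i) x v) := fun i v =>
    ((hFic i).fderiv ℝ).comp_left (g := fun L : _ →L[ℝ] ℝ => L v) rfl
  have int1 : ∀ i : Fin n, Integrable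
      (fun x => fderiv ℝ (fun y => F y i) x (EuclideanSpace.single i 1) * φ x) := fun i =>
    ((cont_comp_fderiv hF i _).mul hφ.continuous).integrable_of_hasCompactSupport
      ((hdFic i _).mul_right)
  have int2 : ∀ i : Fin n, Integrable
      (fun x => F x i * fderiv ℝ φ x (EuclideanSpace.single i 1)) := fun i =>
    ((hFi i).continuous.mul (cont_fderiv_apply hφ _)).integrable_of_hasCompactSupport
      ((hFic i).mul_right)
  have int3 : ∀ i : Fin n, Integrable (fun x => F x i * φ x) := fun i =>
    ((hFi i).continuous.mul hφ.continuous).integrable_of_hasCompactSupport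
      ((hFic i).mul_right)
  have step : ∀ i : Fin n,
      ∫ x, fderiv ℝ (fun y => F y i) x (EuclideanSpace.single i 1) * φ x
        = - ∫ x, F x i * fderiv ℝ φ x (EuclideanSpace.single i 1) := by
    intro i
    have := integral_mul_fderiv_eq_neg_fderiv_mul_of_integrable
      (f := fun y => F y i) (g := φ) (v := EuclideanSpace.single i 1)
      (int1 i) (int2 i) (int3 i) (fun x _ => (hFi i).differentiable (by simp) x)
      (fun x _ => hφ.differentiable (by simp) x)
    linarith
  calc ∫ x, vdiv F x * φ x
      = ∫ x, ∑ i, fderiv ℝ (fun y => F y i) x (EuclideanSpace.single i 1) * φ x := by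
        simp only [vdiv, Finset.sum_mul]
    _ = ∑ i, ∫ x, fderiv ℝ (fun y => F y i) x (EuclideanSpace.single i 1) * φ x :=
        integral_finset_sum _ (fun i _ => int1 i)
    _ = ∑ i, - ∫ x, F x i * fderiv ℝ φ x (EuclideanSpace.single i 1) :=
        Finset.sum_congr rfl fun i _ => step i
    _ = - ∑ i, ∫ x, F x i * fderiv ℝ φ x (EuclideanSpace.single i 1) := by
        rw [← Finset.sum_neg_distrib]
    _ = - ∫ x, ∑ i, F x i * fderiv ℝ φ x (EuclideanSpace.single i 1) := by
        rw [integral_finset_sum _ (fun i _ => int2 i)]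
    _ = - ∫ x, ⟪F x, gradient φ x⟫ := by
        refine congrArg Neg.neg (integral_congr_ae (Filter.Eventually.of_forall fun x => ?_))
        dsimp only
        rw [PiLp.inner_apply]
        refine Finset.sum_congr rfl fun i _ => ?_
        rw [fderiv_eq_inner_grad φ x, EuclideanSpace.inner_single_right]
        simp [mul_comm]

/-- The key weak formulation: `∫ (L_{ij} ψ) φ` equals a symmetric bilinear expression. -/
lemma key_weak (H b : EuclideanSpace ℝ (Fin n) → ℝ)
    (hH : ContDiff ℝ (⊤ : ℕ∞) H) (hb : ContDiff ℝ (⊤ : ℕ∞) b) (pi pj : ℕ)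
    (ψ φ : EuclideanSpace ℝ (Fin n) → ℝ)
    (hψ : ContDiff ℝ (⊤ : ℕ∞) ψ) (hψc : HasCompactSupport ψ)
    (hφ : ContDiff ℝ (⊤ : ℕ∞) φ) (hφc : HasCompactSupport φ) :
    ∫ x, Lop H b pi pj ψ x * φ x
      = ∫ x, (H x ^ (pi + pj + 1) / ((pi : ℝ) + (pj : ℝ) + 1)) * ⟪gradient ψ x, gradient φ x⟫
          - ((pj : ℝ) / ((pi : ℝ) + (pj : ℝ))) * H x ^ (pi + pj) * ψ x
              * ⟪gradient b x, gradient φ x⟫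
          - ((pi : ℝ) / ((pi : ℝ) + (pj : ℝ))) * H x ^ (pi + pj) * φ x
              * ⟪gradient b x, gradient ψ x⟫
          + ((pi : ℝ) * (pj : ℝ) / (((pi + pj - 1 : ℕ) : ℝ))) * H x ^ (pi + pj - 1)
              * (1 + ‖gradient b x‖ ^ 2) * ψ x * φ x := by
  set F : EuclideanSpace ℝ (Fin n) → EuclideanSpace ℝ (Fin n) := fun y =>
      (H y ^ (pi + pj + 1) / ((pi : ℝ) + (pj : ℝ) + 1)) • gradient ψ y
      - (((pj : ℝ) / ((pi : ℝ) + (pj : ℝ))) * H y ^ (pi + pj) * ψ y) • gradient b y with hFdef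
  set R : EuclideanSpace ℝ (Fin n) → ℝ := fun x =>
      -(((pi : ℝ) / ((pi : ℝ) + (pj : ℝ))) * H x ^ (pi + pj) * ⟪gradient b x, gradient ψ x⟫)
      + ((pi : ℝ) * (pj : ℝ) / (((pi + pj - 1 : ℕ) : ℝ))) * H x ^ (pi + pj - 1)
          * (1 + ‖gradient b x‖ ^ 2) * ψ x with hRdef
  have hgb : ContDiff ℝ (⊤ : ℕ∞) (gradient b) := contDiff_grad hb
  have hgψ : ContDiff ℝ (⊤ : ℕ∞) (gradient ψ) := contDiff_grad hψ
  have hc1 : ContDiff ℝ (⊤ : ℕ∞) (fun y => H y ^ (pi + pj + 1) / ((pi : ℝ) + (pj : ℝ) + 1)) :=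
    (hH.pow _).div_const _
  have hc2 : ContDiff ℝ (⊤ : ℕ∞) (fun y => ((pj : ℝ) / ((pi : ℝ) + (pj : ℝ))) * H y ^ (pi + pj) * ψ y) :=
    (contDiff_const.mul (hH.pow _)).mul hψ
  have hFs : ContDiff ℝ (⊤ : ℕ∞) F := (hc1.smul hgψ).sub (hc2.smul hgb)
  have hFc : HasCompactSupport F := by
    have h1 : HasCompactSupport (fun y =>
        (H y ^ (pi + pj + 1) / ((pi : ℝ) + (pj : ℝ) + 1)) • gradient ψ y) :=
      (compsupp_grad hψc).smul_left (f := fun y => H y ^ (pi + pj + 1) / ((pi : ℝ) + (pj : ℝ) + 1))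
    have h2 : HasCompactSupport (fun y =>
        (((pj : ℝ) / ((pi : ℝ) + (pj : ℝ))) * H y ^ (pi + pj) * ψ y) • gradient b y) :=
      HasCompactSupport.smul_right (f' := gradient b)
        (f := fun y => ((pj : ℝ) / ((pi : ℝ) + (pj : ℝ))) * H y ^ (pi + pj) * ψ y)
        (hψc.mul_left (f := fun y => ((pj : ℝ) / ((pi : ℝ) + (pj : ℝ))) * H y ^ (pi + pj)))
    have hFeq : F = (fun y =>
        (H y ^ (pi + pj + 1) / ((pi : ℝ) + (pj : ℝ) + 1)) • gradient ψ y)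
        + -(fun y =>
        (((pj : ℝ) / ((pi : ℝ) + (pj : ℝ))) * H y ^ (pi + pj) * ψ y) • gradient b y) := by
      funext y
      simp [hFdef, sub_eq_add_neg]
    rw [hFeq]
    exact h1.add h2.neg
  have hRc : Continuous R := by
    rw [hRdef]
    exact (((continuous_const.mul (hH.continuous.pow _)).mul
        (hgb.continuous.inner hgψ.continuous)).neg).add
      (((continuous_const.mul (hH.continuous.pow _)).mul
        (continuous_const.add ((hgb.continuous.norm).pow 2))).mul hψ.continuous)
  have hsplit : ∀ x, Lop H b pi pj ψ x * φ x = -(vdiv F x * φ x) + R x * φ x := by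
    intro x
    simp only [Lop, hRdef, hFdef]
    ring
  have intA : Integrable (fun x => -(vdiv F x * φ x)) :=
    (((cont_vdiv hFs).mul hφ.continuous).integrable_of_hasCompactSupport hφc.mul_left).neg
  have intB : Integrable (fun x => R x * φ x) :=
    (hRc.mul hφ.continuous).integrable_of_hasCompactSupport hφc.mul_left
  have intC : Integrable (fun x => ⟪F x, gradient φ x⟫) := by
    refine (hFs.continuous.inner (contDiff_grad hφ).continuous).integrable_of_hasCompactSupport
      (hFc.mono' ?_)
    intro x hx
    by_contra hFx
    simp only [Set.mem_compl_iff, Function.mem_support, not_not] at *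
    exact hx (by simp [Function.notMem_support.mp fun hh => hFx (subset_closure hh)])
  calc ∫ x, Lop H b pi pj ψ x * φ x
      = ∫ x, (-(vdiv F x * φ x) + R x * φ x) :=
        integral_congr_ae (Filter.Eventually.of_forall hsplit)
    _ = (∫ x, -(vdiv F x * φ x)) + ∫ x, R x * φ x := integral_add intA intB
    _ = (∫ x, ⟪F x, gradient φ x⟫) + ∫ x, R x * φ x := by
        rw [integral_neg, ibp_div hFs hFc hφ, neg_neg]
    _ = ∫ x, (⟪F x, gradient φ x⟫ + R x * φ x) := (integral_add intC intB).symm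
    _ = _ := by
        refine integral_congr_ae (Filter.Eventually.of_forall fun x => ?_)
        simp only [hFdef, hRdef, inner_sub_left, real_inner_smul_left]
        ring

end Aux

/-- Adjointness of the Isobe–Kakinuma operators: for smooth compactly supported `φ, ψ`,
`∫ (L_{ij} ψ) φ = ∫ ψ (L_{ji} φ)`; in particular each `L_{ii}` is formally self-adjoint
in `L²(ℝ^n)`. -/
theorem stmt2 {n N : ℕ} (h : ℝ) (p : Fin (N + 1) → ℕ)
    (hp0 : p 0 = 0) (hpmono : StrictMono p)
    (η b : EuclideanSpace ℝ (Fin n) → ℝ)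
    (hη : ContDiff ℝ (⊤ : ℕ∞) η) (hb : ContDiff ℝ (⊤ : ℕ∞) b)
    (H : EuclideanSpace ℝ (Fin n) → ℝ) (hH : ∀ x, H x = h + η x - b x)
    (φ ψ : EuclideanSpace ℝ (Fin n) → ℝ)
    (hφ : ContDiff ℝ (⊤ : ℕ∞) φ) (hφc : HasCompactSupport φ)
    (hψ : ContDiff ℝ (⊤ : ℕ∞) ψ) (hψc : HasCompactSupport ψ) :
    (∀ i j : Fin (N + 1),
      ∫ x, Lop H b (p i) (p j) ψ x * φ x = ∫ x, ψ x * Lop H b (p j) (p i) φ x) ∧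
    (∀ i : Fin (N + 1),
      ∫ x, Lop H b (p i) (p i) ψ x * φ x = ∫ x, ψ x * Lop H b (p i) (p i) φ x) := by
  have hHs : ContDiff ℝ (⊤ : ℕ∞) H := by
    have : H = fun x => h + η x - b x := funext hH
    rw [this]
    exact (contDiff_const.add hη).sub hb
  have main : ∀ i j : Fin (N + 1),
      ∫ x, Lop H b (p i) (p j) ψ x * φ x = ∫ x, ψ x * Lop H b (p j) (p i) φ x := by
    intro i j
    have h1 := key_weak H b hHs hb (p i) (p j) ψ φ hψ hψc hφ hφc
    have h2 := key_weak H b hHs hb (p j) (p i) φ ψ hφ hφc hψ hψc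
    have h3 : ∫ x, ψ x * Lop H b (p j) (p i) φ x = ∫ x, Lop H b (p j) (p i) φ x * ψ x := by
      refine integral_congr_ae (Filter.Eventually.of_forall fun x => ?_)
      ring
    rw [h1, h3, h2]
    refine integral_congr_ae (Filter.Eventually.of_forall fun x => ?_)
    dsimp only
    rw [Nat.add_comm (p j) (p i), real_inner_comm (gradient φ x) (gradient ψ x)]
    ring
  exact ⟨main, fun i => main i i⟩
end

section
/- For a tuple of smooth compactly supported functions φ = (φ_0, ..., φ_N) on ℝ^n, the quadratic form Σ_{i,j=0}^N ∫ (L_ij φ_j) φ_i dx equals the double integral over the water region Ω = {(x,z) : −h + b(x) < z < η(x)} of |∇Φ^app|² + (∂_z Φ^app)², where Φ^app(x,z) = Σ_{i=0}^N (z + h − b(x))^{p_i} φ_i(x); in particular this quadratic form is nonnegative. -/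
open scoped BigOperators RealInnerProductSpace
open MeasureTheory

set_option maxHeartbeats 1000000

section Aux

variable {n : ℕ}
local notation "E" => EuclideanSpace ℝ (Fin n)

lemma grad_inner (f : E → ℝ) (x v : E) : ⟪gradient f x, v⟫ = fderiv ℝ f x v := by
  rw [gradient]; exact InnerProductSpace.toDual_symm_apply

lemma euclid_decomp (v : E) : v = ∑ i, v i • EuclideanSpace.single i 1 := by
  have := (EuclideanSpace.basisFun (Fin n) ℝ).sum_repr v
  simpa [EuclideanSpace.basisFun_apply, EuclideanSpace.basisFun_repr] using this.symm

lemma grad_continuous {f : E → ℝ} (hf : ContDiff ℝ (⊤ : ℕ∞) f) : Continuous (gradient f) := by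
  have : gradient f = fun x => (InnerProductSpace.toDual ℝ E).symm (fderiv ℝ f x) := rfl
  rw [this]
  exact (InnerProductSpace.toDual ℝ E).symm.continuous.comp (hf.continuous_fderiv (by simp))

lemma grad_compact {f : E → ℝ} (hf : HasCompactSupport f) : HasCompactSupport (gradient f) := by
  have : gradient f = fun x => (InnerProductSpace.toDual ℝ E).symm (fderiv ℝ f x) := rfl
  rw [this]
  exact (hf.fderiv ℝ).comp_left (by simp)

lemma grad_contDiff {f : E → ℝ} (hf : ContDiff ℝ (⊤ : ℕ∞) f) : ContDiff ℝ (⊤ : ℕ∞) (gradient f) := by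
  have : gradient f = fun x => (InnerProductSpace.toDual ℝ E).symm (fderiv ℝ f x) := rfl
  rw [this]
  exact ((InnerProductSpace.toDual ℝ E).symm.toContinuousLinearEquiv.toContinuousLinearMap.contDiff).comp
    (hf.fderiv_right (by simp))

lemma hcs_inner {f g : E → E} (hg : HasCompactSupport g) :
    HasCompactSupport (fun x => (⟪f x, g x⟫ : ℝ)) := by
  refine hg.mono fun x hx => ?_
  simp only [Function.mem_support, Ne] at hx ⊢
  intro hgx
  exact hx (by rw [hgx, inner_zero_right])

lemma vdiv_continuous {X : E → E} (hX : ContDiff ℝ (⊤ : ℕ∞) X) : Continuous (vdiv X) := by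
  have hXi : ∀ i, ContDiff ℝ (⊤ : ℕ∞) (fun y => X y i) := fun i =>
    (EuclideanSpace.proj (𝕜 := ℝ) i).contDiff.comp hX
  exact continuous_finset_sum _ fun i _ =>
    (ContinuousLinearMap.apply ℝ ℝ (EuclideanSpace.single i 1)).continuous.comp
      ((hXi i).continuous_fderiv (by simp))

lemma div_parts {X : E → E} {f : E → ℝ} (hX : ContDiff ℝ (⊤ : ℕ∞) X) (hXc : HasCompactSupport X)
    (hf : ContDiff ℝ (⊤ : ℕ∞) f) :
    ∫ x, vdiv X x * f x = - ∫ x, ⟪X x, gradient f x⟫ := by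
  have hXi : ∀ i, ContDiff ℝ (⊤ : ℕ∞) (fun y => X y i) := fun i =>
    (EuclideanSpace.proj (𝕜 := ℝ) i).contDiff.comp hX
  have hXci : ∀ i, HasCompactSupport (fun y => X y i) := fun i => by
    have : HasCompactSupport ((fun v : E => v i) ∘ X) := hXc.comp_left (by simp)
    exact this
  have hdXi : ∀ i, Continuous (fun x => fderiv ℝ (fun y => X y i) x (EuclideanSpace.single i 1)) :=
    fun i => (ContinuousLinearMap.apply ℝ ℝ (EuclideanSpace.single i 1)).continuous.comp
      ((hXi i).continuous_fderiv (by simp))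
  have hdXic : ∀ i, HasCompactSupport
      (fun x => fderiv ℝ (fun y => X y i) x (EuclideanSpace.single i 1)) := fun i => by
    have : HasCompactSupport ((fun L : E →L[ℝ] ℝ => L (EuclideanSpace.single i 1)) ∘
        fderiv ℝ (fun y => X y i)) := ((hXci i).fderiv ℝ).comp_left (by simp)
    exact this
  have hInt1 : ∀ i : Fin n, Integrable
      (fun x => fderiv ℝ (fun y => X y i) x (EuclideanSpace.single i 1) * f x) := fun i =>
    ((hdXi i).mul hf.continuous).integrable_of_hasCompactSupport ((hdXic i).mul_right)
  have hInt2 : ∀ i : Fin n, Integrable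
      (fun x => X x i * fderiv ℝ f x (EuclideanSpace.single i 1)) := fun i =>
    ((hXi i).continuous.mul ((ContinuousLinearMap.apply ℝ ℝ
      (EuclideanSpace.single i 1)).continuous.comp
      (hf.continuous_fderiv (by simp)))).integrable_of_hasCompactSupport ((hXci i).mul_right)
  have hInt3 : ∀ i : Fin n, Integrable (fun x => X x i * f x) := fun i =>
    ((hXi i).continuous.mul hf.continuous).integrable_of_hasCompactSupport ((hXci i).mul_right)
  have key : ∀ i : Fin n,
      (∫ x, fderiv ℝ (fun y => X y i) x (EuclideanSpace.single i 1) * f x)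
        = - ∫ x, X x i * fderiv ℝ f x (EuclideanSpace.single i 1) := by
    intro i
    have := integral_mul_fderiv_eq_neg_fderiv_mul_of_integrable (hInt1 i) (hInt2 i) (hInt3 i)
      (fun x _ => (hXi i).differentiable (by simp) x) (fun x _ => hf.differentiable (by simp) x)
    linarith
  have hpt : (fun x => ∑ i, X x i * fderiv ℝ f x (EuclideanSpace.single i 1))
      = fun x => ⟪X x, gradient f x⟫ := by
    funext x
    rw [real_inner_comm, grad_inner]
    conv_rhs => rw [euclid_decomp (X x)]
    rw [map_sum]
    simp [smul_eq_mul]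
  calc ∫ x, vdiv X x * f x
      = ∫ x, ∑ i, fderiv ℝ (fun y => X y i) x (EuclideanSpace.single i 1) * f x := by
        simp only [vdiv, Finset.sum_mul]
    _ = ∑ i, ∫ x, fderiv ℝ (fun y => X y i) x (EuclideanSpace.single i 1) * f x :=
        integral_finset_sum _ (fun i _ => hInt1 i)
    _ = ∑ i, -∫ x, X x i * fderiv ℝ f x (EuclideanSpace.single i 1) :=
        Finset.sum_congr rfl (fun i _ => key i)
    _ = - ∑ i, ∫ x, X x i * fderiv ℝ f x (EuclideanSpace.single i 1) := by
        rw [Finset.sum_neg_distrib]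
    _ = - ∫ x, ∑ i, X x i * fderiv ℝ f x (EuclideanSpace.single i 1) := by
        rw [integral_finset_sum _ (fun i _ => hInt2 i)]
    _ = - ∫ x, ⟪X x, gradient f x⟫ := by rw [hpt]

lemma grad_formula {N' : ℕ} (h : ℝ) (p : Fin N' → ℕ) (b : E → ℝ) (hb : ContDiff ℝ (⊤ : ℕ∞) b)
    (φ : Fin N' → E → ℝ) (hφ : ∀ i, ContDiff ℝ (⊤ : ℕ∞) (φ i)) (z : ℝ) (x : E) :
    gradient (fun y => ∑ i, (z + h - b y) ^ (p i) * φ i y) x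
      = ∑ i, ((z + h - b x) ^ (p i) • gradient (φ i) x
          - ((p i : ℝ) * (z + h - b x) ^ (p i - 1) * φ i x) • gradient b x) := by
  have hbase : HasFDerivAt (fun y : E => z + h - b y) (-(fderiv ℝ b x)) x := by
    exact ((hb.differentiable (by simp)) x).hasFDerivAt.const_sub (z + h)
  have hpow : ∀ i, HasFDerivAt (fun y : E => (z + h - b y) ^ (p i))
      (((p i : ℝ) * (z + h - b x) ^ (p i - 1)) • (-(fderiv ℝ b x))) x := fun i =>
    (hasDerivAt_pow (p i) _).comp_hasFDerivAt x hbase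
  have hterm : ∀ i, HasFDerivAt (fun y : E => (z + h - b y) ^ (p i) * φ i y)
      ((z + h - b x) ^ (p i) • fderiv ℝ (φ i) x
        + φ i x • (((p i : ℝ) * (z + h - b x) ^ (p i - 1)) • (-(fderiv ℝ b x)))) x := fun i =>
    (hpow i).mul ((hφ i).differentiable (by simp) x).hasFDerivAt
  have hsum := HasFDerivAt.fun_sum (fun i (_ : i ∈ Finset.univ) => hterm i)
  rw [gradient, hsum.fderiv, map_sum]
  refine Finset.sum_congr rfl fun i _ => ?_
  rw [map_add, _root_.map_smul, _root_.map_smul, _root_.map_smul, map_neg]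
  have e1 : (InnerProductSpace.toDual ℝ (EuclideanSpace ℝ (Fin n))).symm (fderiv ℝ (φ i) x)
      = gradient (φ i) x := rfl
  have e2 : (InnerProductSpace.toDual ℝ (EuclideanSpace ℝ (Fin n))).symm (fderiv ℝ b x)
      = gradient b x := rfl
  rw [e1, e2]
  module

lemma deriv_formula {N' : ℕ} (h : ℝ) (p : Fin N' → ℕ) (c : ℝ) (φv : Fin N' → ℝ) (z : ℝ) :
    deriv (fun z' => ∑ i, (z' + h - c) ^ (p i) * φv i) z
      = ∑ i, (p i : ℝ) * (z + h - c) ^ (p i - 1) * φv i := by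
  have : HasDerivAt (fun z' => ∑ i, (z' + h - c) ^ (p i) * φv i)
      (∑ i, (p i : ℝ) * (z + h - c) ^ (p i - 1) * φv i) z := by
    refine HasDerivAt.fun_sum fun i _ => ?_
    have := ((((hasDerivAt_id z).add_const h).sub_const c).pow (p i)).mul_const (φv i)
    simpa using this
  exact this.deriv

lemma int_tpow (zl zu d : ℝ) (h0 : zl + d = 0) (k : ℕ) :
    ∫ z in zl..zu, (z + d) ^ k = (zu + d) ^ (k + 1) / (k + 1) := by
  rw [intervalIntegral.integral_comp_add_right (fun t => t ^ k) d, h0,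
    integral_pow, zero_pow (Nat.succ_ne_zero k), sub_zero]

/-- The integrated quadratic form density. -/
noncomputable def Qf {n : ℕ} (H b : EuclideanSpace ℝ (Fin n) → ℝ) (pi pj : ℕ)
    (φi φj : EuclideanSpace ℝ (Fin n) → ℝ) (x : EuclideanSpace ℝ (Fin n)) : ℝ :=
  H x ^ (pi + pj + 1) / ((pi : ℝ) + (pj : ℝ) + 1) * ⟪gradient φj x, gradient φi x⟫
  - ((pj : ℝ) / ((pi : ℝ) + (pj : ℝ)) * H x ^ (pi + pj) * φj x) * ⟪gradient b x, gradient φi x⟫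
  - ((pi : ℝ) / ((pi : ℝ) + (pj : ℝ)) * H x ^ (pi + pj) * ⟪gradient b x, gradient φj x⟫) * φi x
  + ((pi : ℝ) * (pj : ℝ) / ((pi + pj - 1 : ℕ) : ℝ) * H x ^ (pi + pj - 1)
      * (1 + ‖gradient b x‖ ^ 2) * φj x) * φi x

lemma Qf_continuous {H b φi φj : E → ℝ} (pi pj : ℕ) (hH : ContDiff ℝ (⊤ : ℕ∞) H)
    (hb : ContDiff ℝ (⊤ : ℕ∞) b) (hφi : ContDiff ℝ (⊤ : ℕ∞) φi) (hφj : ContDiff ℝ (⊤ : ℕ∞) φj) :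
    Continuous (Qf H b pi pj φi φj) := by
  have gb := grad_continuous hb
  have gi := grad_continuous hφi
  have gj := grad_continuous hφj
  have hHc := hH.continuous
  have cphii := hφi.continuous
  have cphij := hφj.continuous
  have c1 : Continuous fun x => (⟪gradient φj x, gradient φi x⟫ : ℝ) := gj.inner gi
  have c2 : Continuous fun x => (⟪gradient b x, gradient φi x⟫ : ℝ) := gb.inner gi
  have c3 : Continuous fun x => (⟪gradient b x, gradient φj x⟫ : ℝ) := gb.inner gj
  have c4 : Continuous fun x => ‖gradient b x‖ ^ 2 := (gb.norm).pow 2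
  unfold Qf
  fun_prop

lemma Qf_compact {H b φi φj : E → ℝ} (pi pj : ℕ)
    (hφic : HasCompactSupport φi) (hφjc : HasCompactSupport φj) :
    HasCompactSupport (Qf H b pi pj φi φj) := by
  refine hφic.mono' fun x hx => ?_
  by_contra hxt
  apply hx
  have h0 : φi x = 0 := image_eq_zero_of_notMem_tsupport hxt
  have h1 : gradient φi x = 0 := by
    have hf : fderiv ℝ φi x = 0 := by
      by_contra h'
      exact hxt (support_fderiv_subset ℝ (Function.mem_support.mpr h'))
    rw [gradient, hf, map_zero]
  simp [Qf, h0, h1, inner_zero_right]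

lemma Qf_integrable {H b φi φj : E → ℝ} (pi pj : ℕ) (hH : ContDiff ℝ (⊤ : ℕ∞) H)
    (hb : ContDiff ℝ (⊤ : ℕ∞) b) (hφi : ContDiff ℝ (⊤ : ℕ∞) φi) (hφic : HasCompactSupport φi)
    (hφj : ContDiff ℝ (⊤ : ℕ∞) φj) (hφjc : HasCompactSupport φj) :
    Integrable (Qf H b pi pj φi φj) :=
  (Qf_continuous pi pj hH hb hφi hφj).integrable_of_hasCompactSupport (Qf_compact pi pj hφic hφjc)

end Aux

section Key1
variable {n : ℕ}
local notation "E" => EuclideanSpace ℝ (Fin n)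

lemma key1_gen {H b φi φj : E → ℝ} (pi pj : ℕ)
    (hHs : ContDiff ℝ (⊤ : ℕ∞) H) (hbs : ContDiff ℝ (⊤ : ℕ∞) b)
    (hφi : ContDiff ℝ (⊤ : ℕ∞) φi) (hφic : HasCompactSupport φi)
    (hφj : ContDiff ℝ (⊤ : ℕ∞) φj) (hφjc : HasCompactSupport φj) :
    ∫ x, Lop H b pi pj φj x * φi x = ∫ x, Qf H b pi pj φi φj x := by
  set X : E → E := fun y =>
      (H y ^ (pi + pj + 1) / ((pi : ℝ) + (pj : ℝ) + 1)) • gradient φj y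
      - (((pj : ℝ) / ((pi : ℝ) + (pj : ℝ))) * H y ^ (pi + pj) * φj y) • gradient b y with hXdef
  have hXs : ContDiff ℝ (⊤ : ℕ∞) X :=
    (((hHs.pow _).div_const _).smul (grad_contDiff hφj)).sub
      (((contDiff_const.mul (hHs.pow _)).mul hφj).smul (grad_contDiff hbs))
  have hXc : HasCompactSupport X := by
    refine hφjc.mono' fun x hx => ?_
    by_contra hxt
    apply hx
    have h0 : φj x = 0 := image_eq_zero_of_notMem_tsupport hxt
    have h1 : gradient φj x = 0 := by
      have hf : fderiv ℝ φj x = 0 := by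
        by_contra h'
        exact hxt (support_fderiv_subset ℝ (Function.mem_support.mpr h'))
      rw [gradient, hf, map_zero]
    simp [hXdef, h0, h1]
  -- continuity facts
  have gb := grad_continuous hbs
  have gj := grad_continuous hφj
  have gi := grad_continuous hφi
  have hHc := hHs.continuous
  have hCc : Continuous fun x =>
      ((pi : ℝ) / ((pi : ℝ) + (pj : ℝ))) * H x ^ (pi + pj) * ⟪gradient b x, gradient φj x⟫ :=
    (continuous_const.mul (hHc.pow _)).mul (gb.inner gj)
  have hDc : Continuous fun x =>
      ((pi : ℝ) * (pj : ℝ) / (((pi + pj - 1 : ℕ)) : ℝ)) * H x ^ (pi + pj - 1)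
        * (1 + ‖gradient b x‖ ^ 2) * φj x :=
    (((continuous_const.mul (hHc.pow _)).mul (continuous_const.add ((gb.norm).pow 2))).mul
      hφj.continuous)
  have hInt1 : Integrable (fun x => vdiv X x * φi x) :=
    ((vdiv_continuous hXs).mul hφi.continuous).integrable_of_hasCompactSupport
      (HasCompactSupport.mul_left hφic)
  have hInt2 : Integrable (fun x =>
      (((pi : ℝ) * (pj : ℝ) / (((pi + pj - 1 : ℕ)) : ℝ)) * H x ^ (pi + pj - 1)
        * (1 + ‖gradient b x‖ ^ 2) * φj x
       - ((pi : ℝ) / ((pi : ℝ) + (pj : ℝ))) * H x ^ (pi + pj) * ⟪gradient b x, gradient φj x⟫)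
      * φi x) :=
    ((hDc.sub hCc).mul hφi.continuous).integrable_of_hasCompactSupport
      (HasCompactSupport.mul_left hφic)
  have hInt3 : Integrable (fun x => (⟪X x, gradient φi x⟫ : ℝ)) :=
    (hXs.continuous.inner gi).integrable_of_hasCompactSupport
      (hcs_inner (grad_compact hφic))
  have step1 : ∀ x, Lop H b pi pj φj x * φi x
      = (((pi : ℝ) * (pj : ℝ) / (((pi + pj - 1 : ℕ)) : ℝ)) * H x ^ (pi + pj - 1)
            * (1 + ‖gradient b x‖ ^ 2) * φj x
          - ((pi : ℝ) / ((pi : ℝ) + (pj : ℝ))) * H x ^ (pi + pj)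
            * ⟪gradient b x, gradient φj x⟫) * φi x
        - vdiv X x * φi x := by
    intro x
    simp only [Lop, hXdef]
    ring
  calc ∫ x, Lop H b pi pj φj x * φi x
      = ∫ x, ((((pi : ℝ) * (pj : ℝ) / (((pi + pj - 1 : ℕ)) : ℝ)) * H x ^ (pi + pj - 1)
              * (1 + ‖gradient b x‖ ^ 2) * φj x
            - ((pi : ℝ) / ((pi : ℝ) + (pj : ℝ))) * H x ^ (pi + pj)
              * ⟪gradient b x, gradient φj x⟫) * φi x
          - vdiv X x * φi x) := by
        exact integral_congr_ae (Filter.Eventually.of_forall fun x => step1 x)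
    _ = (∫ x,
          (((pi : ℝ) * (pj : ℝ) / (((pi + pj - 1 : ℕ)) : ℝ)) * H x ^ (pi + pj - 1)
              * (1 + ‖gradient b x‖ ^ 2) * φj x
            - ((pi : ℝ) / ((pi : ℝ) + (pj : ℝ))) * H x ^ (pi + pj)
              * ⟪gradient b x, gradient φj x⟫) * φi x) - ∫ x, vdiv X x * φi x := by
        rw [integral_sub hInt2 hInt1]
    _ = (∫ x,
          (((pi : ℝ) * (pj : ℝ) / (((pi + pj - 1 : ℕ)) : ℝ)) * H x ^ (pi + pj - 1)
              * (1 + ‖gradient b x‖ ^ 2) * φj x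
            - ((pi : ℝ) / ((pi : ℝ) + (pj : ℝ))) * H x ^ (pi + pj)
              * ⟪gradient b x, gradient φj x⟫) * φi x) + ∫ x, (⟪X x, gradient φi x⟫ : ℝ) := by
        rw [div_parts hXs hXc hφi]
        ring
    _ = ∫ x, ((((pi : ℝ) * (pj : ℝ) / (((pi + pj - 1 : ℕ)) : ℝ)) * H x ^ (pi + pj - 1)
              * (1 + ‖gradient b x‖ ^ 2) * φj x
            - ((pi : ℝ) / ((pi : ℝ) + (pj : ℝ))) * H x ^ (pi + pj)
              * ⟪gradient b x, gradient φj x⟫) * φi x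
          + (⟪X x, gradient φi x⟫ : ℝ)) := by
        rw [integral_add hInt2 hInt3]
    _ = ∫ x, Qf H b pi pj φi φj x := by
        refine integral_congr_ae (Filter.Eventually.of_forall fun x => ?_)
        simp only [hXdef, Qf, inner_sub_left, real_inner_smul_left]
        ring
end Key1

section Key2
variable {n : ℕ}
local notation "E" => EuclideanSpace ℝ (Fin n)

lemma key2_gen {N : ℕ} (h : ℝ) (p : Fin (N + 1) → ℕ)
    (b : E → ℝ) (hb : ContDiff ℝ (⊤ : ℕ∞) b) (η H : E → ℝ) (hH : ∀ x, H x = h + η x - b x)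
    (φ : Fin (N + 1) → E → ℝ) (hφ : ∀ i, ContDiff ℝ (⊤ : ℕ∞) (φ i))
    (Φapp : E → ℝ → ℝ)
    (hΦapp : ∀ x z, Φapp x z = ∑ i, (z + h - b x) ^ (p i) * φ i x) (x : E) :
    (∫ z in (-h + b x)..(η x),
        (‖gradient (fun y => Φapp y z) x‖ ^ 2 + (deriv (fun z' => Φapp x z') z) ^ 2))
      = ∑ i, ∑ j, Qf H b (p i) (p j) (φ i) (φ j) x := by
  have hg : ∀ z : ℝ, gradient (fun y => Φapp y z) x
      = ∑ i, ((z + h - b x) ^ (p i) • gradient (φ i) x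
          - ((p i : ℝ) * (z + h - b x) ^ (p i - 1) * φ i x) • gradient b x) := by
    intro z
    have e : (fun y => Φapp y z) = fun y => ∑ i, (z + h - b y) ^ (p i) * φ i y :=
      funext fun y => hΦapp y z
    rw [e, grad_formula h p b hb φ hφ z x]
  have hd : ∀ z : ℝ, deriv (fun z' => Φapp x z') z
      = ∑ i, (p i : ℝ) * (z + h - b x) ^ (p i - 1) * φ i x := by
    intro z
    have e : (fun z' => Φapp x z') = fun z' => ∑ i, (z' + h - b x) ^ (p i) * φ i x :=
      funext fun z' => hΦapp x z'
    rw [e, deriv_formula]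
  set S : Fin (N + 1) → Fin (N + 1) → ℝ → ℝ := fun i j z =>
    ⟪gradient (φ j) x, gradient (φ i) x⟫ * (z + h - b x) ^ (p i + p j)
    - (⟪gradient b x, gradient (φ i) x⟫ * ((p j : ℝ) * φ j x))
        * (z + h - b x) ^ (p i + (p j - 1))
    - (⟪gradient b x, gradient (φ j) x⟫ * ((p i : ℝ) * φ i x))
        * (z + h - b x) ^ (p j + (p i - 1))
    + ((1 + ‖gradient b x‖ ^ 2) * (((p i : ℝ) * φ i x) * ((p j : ℝ) * φ j x)))
        * (z + h - b x) ^ ((p i - 1) + (p j - 1)) with hS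
  have hScont : ∀ i j, Continuous (S i j) := by
    intro i j
    rw [hS]
    fun_prop
  have hpt : ∀ z : ℝ, ‖gradient (fun y => Φapp y z) x‖ ^ 2
      + (deriv (fun z' => Φapp x z') z) ^ 2 = ∑ i, ∑ j, S i j z := by
    intro z
    rw [hg z, hd z, ← real_inner_self_eq_norm_sq, sum_inner, sq, Finset.sum_mul_sum,
      ← Finset.sum_add_distrib]
    refine Finset.sum_congr rfl fun i _ => ?_
    rw [inner_sum, ← Finset.sum_add_distrib]
    refine Finset.sum_congr rfl fun j _ => ?_
    simp only [hS, inner_sub_left, inner_sub_right, real_inner_smul_left, real_inner_smul_right,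
      real_inner_self_eq_norm_sq]
    rw [real_inner_comm (gradient (φ i) x) (gradient (φ j) x),
      real_inner_comm (gradient (φ i) x) (gradient b x)]
    ring
  have hHx : η x + (h - b x) = H x := by rw [hH x]; ring
  have h0 : (-h + b x) + (h - b x) = 0 := by ring
  have hint : ∀ i j, (∫ z in (-h + b x)..(η x), S i j z)
      = Qf H b (p i) (p j) (φ i) (φ j) x := by
    intro i j
    have hA : IntervalIntegrable (fun z =>
        (⟪gradient (φ j) x, gradient (φ i) x⟫ : ℝ) * (z + h - b x) ^ (p i + p j))
        volume (-h + b x) (η x) := (by fun_prop : Continuous _).intervalIntegrable _ _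
    have hB : IntervalIntegrable (fun z =>
        ((⟪gradient b x, gradient (φ i) x⟫ : ℝ) * ((p j : ℝ) * φ j x))
          * (z + h - b x) ^ (p i + (p j - 1))) volume (-h + b x) (η x) :=
      (by fun_prop : Continuous _).intervalIntegrable _ _
    have hC : IntervalIntegrable (fun z =>
        ((⟪gradient b x, gradient (φ j) x⟫ : ℝ) * ((p i : ℝ) * φ i x))
          * (z + h - b x) ^ (p j + (p i - 1))) volume (-h + b x) (η x) :=
      (by fun_prop : Continuous _).intervalIntegrable _ _
    have hD : IntervalIntegrable (fun z =>
        ((1 + ‖gradient b x‖ ^ 2) * (((p i : ℝ) * φ i x) * ((p j : ℝ) * φ j x)))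
          * (z + h - b x) ^ ((p i - 1) + (p j - 1))) volume (-h + b x) (η x) :=
      (by fun_prop : Continuous _).intervalIntegrable _ _
    rw [hS]
    rw [intervalIntegral.integral_add ((hA.sub hB).sub hC) hD,
      intervalIntegral.integral_sub (hA.sub hB) hC,
      intervalIntegral.integral_sub hA hB,
      intervalIntegral.integral_const_mul, intervalIntegral.integral_const_mul,
      intervalIntegral.integral_const_mul, intervalIntegral.integral_const_mul]
    have htp : ∀ k : ℕ, (∫ z in (-h + b x)..(η x), (z + h - b x) ^ k)
        = H x ^ (k + 1) / ((k : ℝ) + 1) := by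
      intro k
      have e : ∀ z : ℝ, z + h - b x = z + (h - b x) := fun z => by ring
      simp only [e]
      rw [int_tpow _ _ _ h0 k, hHx]
    rw [htp, htp, htp, htp]
    -- now pure algebra with case analysis
    unfold Qf
    rcases Nat.eq_zero_or_pos (p i) with hpi | hpi <;>
      rcases Nat.eq_zero_or_pos (p j) with hpj | hpj
    · rw [hpi, hpj]
      norm_num
      ring
    · obtain ⟨c, hc⟩ : ∃ c, p j = c + 1 := ⟨p j - 1, by omega⟩
      rw [hpi, hc]
      have h1 : (0 : ℕ) + (c + 1 - 1) = c := by omega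
      have h2 : (0 : ℕ) + (c + 1) - 1 = c := by omega
      rw [h1, h2]
      have hne : ((0 : ℝ) + (↑c + 1)) ≠ 0 := by positivity
      push_cast
      field_simp
      ring
    · obtain ⟨a, ha⟩ : ∃ a, p i = a + 1 := ⟨p i - 1, by omega⟩
      rw [hpj, ha]
      norm_num
      push_cast
      field_simp
    · obtain ⟨a, ha⟩ : ∃ a, p i = a + 1 := ⟨p i - 1, by omega⟩
      obtain ⟨c, hc⟩ : ∃ c, p j = c + 1 := ⟨p j - 1, by omega⟩
      rw [ha, hc]
      have h1 : (a + 1 : ℕ) + (c + 1 - 1) = a + c + 1 := by omega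
      have h2 : (c + 1 : ℕ) + (a + 1 - 1) = a + c + 1 := by omega
      have h3 : (a + 1 - 1 : ℕ) + (c + 1 - 1 : ℕ) = a + c := by omega
      have h4 : (a + 1 : ℕ) + (c + 1) - 1 = a + c + 1 := by omega
      rw [h1, h2, h3, h4]
      push_cast
      field_simp
      ring
  calc (∫ z in (-h + b x)..(η x),
        (‖gradient (fun y => Φapp y z) x‖ ^ 2 + (deriv (fun z' => Φapp x z') z) ^ 2))
      = ∫ z in (-h + b x)..(η x), ∑ i, ∑ j, S i j z :=
        intervalIntegral.integral_congr fun z _ => hpt z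
    _ = ∑ i, ∫ z in (-h + b x)..(η x), ∑ j, S i j z :=
        intervalIntegral.integral_finset_sum (fun i _ =>
          (continuous_finset_sum _ fun j _ => hScont i j).intervalIntegrable _ _)
    _ = ∑ i, ∑ j, ∫ z in (-h + b x)..(η x), S i j z :=
        Finset.sum_congr rfl fun i _ =>
          intervalIntegral.integral_finset_sum (fun j _ => (hScont i j).intervalIntegrable _ _)
    _ = ∑ i, ∑ j, Qf H b (p i) (p j) (φ i) (φ j) x :=
        Finset.sum_congr rfl fun i _ => Finset.sum_congr rfl fun j _ => hint i j
end Key2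

/-- The quadratic form `Σ_{i,j} ∫ (L_{ij} φ_j) φ_i` equals the Dirichlet integral of the
ansatz `Φ^app(x,z) = Σ_i (z + h − b(x))^{p_i} φ_i(x)` over the water region
`{(x,z) : −h + b(x) < z < η(x)}` (written as an iterated integral), and in particular
the quadratic form is nonnegative. -/
theorem stmt4 {n N : ℕ} (h : ℝ) (p : Fin (N + 1) → ℕ)
    (hp0 : p 0 = 0) (hpmono : StrictMono p)
    (η b : EuclideanSpace ℝ (Fin n) → ℝ)
    (hη : ContDiff ℝ (⊤ : ℕ∞) η) (hb : ContDiff ℝ (⊤ : ℕ∞) b)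
    (hHpos : ∀ x, 0 < h + η x - b x)
    (H : EuclideanSpace ℝ (Fin n) → ℝ) (hH : ∀ x, H x = h + η x - b x)
    (φ : Fin (N + 1) → EuclideanSpace ℝ (Fin n) → ℝ)
    (hφ : ∀ i, ContDiff ℝ (⊤ : ℕ∞) (φ i)) (hφc : ∀ i, HasCompactSupport (φ i))
    (Φapp : EuclideanSpace ℝ (Fin n) → ℝ → ℝ)
    (hΦapp : ∀ x z, Φapp x z = ∑ i, (z + h - b x) ^ (p i) * φ i x) :
    (∑ i, ∑ j, ∫ x, Lop H b (p i) (p j) (φ j) x * φ i x)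
      = ∫ x, ∫ z in (-h + b x)..(η x),
          (‖gradient (fun y => Φapp y z) x‖ ^ 2 + (deriv (fun z' => Φapp x z') z) ^ 2) ∧
    0 ≤ ∑ i, ∑ j, ∫ x, Lop H b (p i) (p j) (φ j) x * φ i x := by
  have hHs : ContDiff ℝ (⊤ : ℕ∞) H := by
    have e : H = fun x => h + η x - b x := funext hH
    rw [e]; exact (contDiff_const.add hη).sub hb
  have key1 : ∀ i j : Fin (N + 1), (∫ x, Lop H b (p i) (p j) (φ j) x * φ i x)
      = ∫ x, Qf H b (p i) (p j) (φ i) (φ j) x := fun i j =>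
    key1_gen (p i) (p j) hHs hb (hφ i) (hφc i) (hφ j) (hφc j)
  have hQint : ∀ i j : Fin (N + 1), Integrable (Qf H b (p i) (p j) (φ i) (φ j)) := fun i j =>
    Qf_integrable _ _ hHs hb (hφ i) (hφc i) (hφ j) (hφc j)
  have main : (∑ i, ∑ j, ∫ x, Lop H b (p i) (p j) (φ j) x * φ i x)
      = ∫ x, ∫ z in (-h + b x)..(η x),
          (‖gradient (fun y => Φapp y z) x‖ ^ 2 + (deriv (fun z' => Φapp x z') z) ^ 2) := by
    calc (∑ i, ∑ j, ∫ x, Lop H b (p i) (p j) (φ j) x * φ i x)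
        = ∑ i, ∑ j, ∫ x, Qf H b (p i) (p j) (φ i) (φ j) x :=
          Finset.sum_congr rfl fun i _ => Finset.sum_congr rfl fun j _ => key1 i j
      _ = ∑ i : Fin (N + 1), ∫ x, ∑ j, Qf H b (p i) (p j) (φ i) (φ j) x :=
          Finset.sum_congr rfl fun i _ =>
            (integral_finset_sum _ (fun j _ => hQint i j)).symm
      _ = ∫ x, ∑ i, ∑ j, Qf H b (p i) (p j) (φ i) (φ j) x :=
          (integral_finset_sum _ (fun i _ =>
            integrable_finset_sum _ (fun j _ => hQint i j))).symm
      _ = ∫ x, ∫ z in (-h + b x)..(η x),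
          (‖gradient (fun y => Φapp y z) x‖ ^ 2 + (deriv (fun z' => Φapp x z') z) ^ 2) :=
          integral_congr_ae (Filter.Eventually.of_forall fun x =>
            (key2_gen h p b hb η H hH φ hφ Φapp hΦapp x).symm)
  refine ⟨main, ?_⟩
  rw [main]
  refine integral_nonneg fun x => ?_
  refine intervalIntegral.integral_nonneg (by have := hHpos x; linarith) (fun u _ => by positivity)
end

section
/- Consider an abstract evolution system of the form B(η) ∂_t (η, φ⃗) = δE(η, φ⃗), where B(η) is the skew-symmetric block operator with zero diagonal blocks, top-right block −l(H)^T, and bottom-left block l(H). Assume: (i) the map φ ↦ φ⃗ = S(η)φ is linear and satisfies l(H)·S(η)φ = φ; (ii) δ_{φ⃗}E(η, S(η)φ) = ρ (L_0 S(η)φ) l(H); (iii) the Hamiltonian H^IK(η,φ) = (1/ρ) E(η, S(η)φ) has variational derivatives δ_φ H^IK = L_0 S(η)φ and δ_η H^IK = (1/ρ) δ_η E(η, S(η)φ) − (l'(H)·S(η)φ) L_0 S(η)φ, where l(H)·D_η S(η)[η̇]φ + (l'(H)·S(η)φ) η̇ = 0. Then (η, φ⃗) with φ⃗ = S(η)φ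 solves the system B(η) ∂_t(η, φ⃗) = δE if and only if (η, φ) with φ = l(H)·φ⃗ solves Hamilton's canonical equations ∂_t η = δ_φ H^IK, ∂_t φ = −δ_η H^IK. -/
/-! Since `l₀ = 1`, the row `i = 0` of `l(H) ∂ₜη = (L₀ S(η)φ) l(H)` already says `∂ₜη = δ_φ H^IK`,
and the other rows follow from it. Given that, the chain rule for `φ = l(H)·φ⃗` turns the
remaining row `−l(H)·∂ₜφ⃗ = ρ⁻¹ δ_η E` into `∂ₜφ = −δ_η H^IK`: the two `(l'(H)·φ⃗) ∂ₜη` terms cancel. -/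

theorem forall_mul_eq_mul_iff_of_eq_one {ι R : Type*} [CommRing R] {l : ι → R} {i₀ : ι}
    (hl : l i₀ = 1) {a b : R} : (∀ i, l i * a = b * l i) ↔ a = b :=
  ⟨fun h => by simpa [hl] using h i₀, fun hab i => by rw [hab, mul_comm]⟩

theorem add_eq_neg_sub_iff_neg_eq {G : Type*} [AddCommGroup G] {s x e : G} :
    s + x = -(e - x) ↔ -s = e := by
  rw [neg_sub, sub_eq_add_neg, add_comm s, add_left_cancel_iff, neg_eq_iff_eq_neg]

theorem stmt8_general {N : ℕ} (F : Type*) [CommRing F] [Algebra ℝ F]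
    (ρ : ℝ) (hρ : 0 < ρ)
    (l l' : Fin (N + 1) → F) (hl0 : l 0 = 1)
    (S : F →ₗ[ℝ] (Fin (N + 1) → F))
    (φ : F)
    (L0Sφ : F)                     -- the field `L_0(H,b) S(η)φ`
    (deltaEφ : Fin (N + 1) → F)    -- `δ_{φ⃗} E(η, S(η)φ)`
    (deltaEη : F)                  -- `δ_η E(η, S(η)φ)`
    (deltaHφ deltaHη : F)          -- variational derivatives of `H^IK`
    (hii : ∀ i, deltaEφ i = ρ • (L0Sφ * l i))
    (hiii₁ : deltaHφ = L0Sφ)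
    (hiii₂ : deltaHη = ρ⁻¹ • deltaEη - (∑ i, l' i * S φ i) * L0Sφ)
    (ηdot φdot : F) (φvecdot : Fin (N + 1) → F)
    (hchain : φdot = ∑ i, l i * φvecdot i + (∑ i, l' i * S φ i) * ηdot) :
    ((∀ i, l i * ηdot = ρ⁻¹ • deltaEφ i) ∧
        -(∑ i, l i * φvecdot i) = ρ⁻¹ • deltaEη)
      ↔ (ηdot = deltaHφ ∧ φdot = -deltaHη) := by
  have hη : (∀ i, l i * ηdot = ρ⁻¹ • deltaEφ i) ↔ ηdot = L0Sφ := by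
    simp_rw [hii, inv_smul_smul₀ hρ.ne']
    exact forall_mul_eq_mul_iff_of_eq_one hl0
  rw [hη, hiii₁]
  refine and_congr_right fun hηdot => ?_
  rw [hchain, hiii₂, ← hηdot]
  exact add_eq_neg_sub_iff_neg_eq.symm

/-- Abstract Hamiltonian structure of the Isobe–Kakinuma model (pointwise in time).
Fields live in a commutative ℝ-algebra `F`. Given the tuple `l(H)` (with `l_0 = H^{p_0} = 1`)
and `l'(H)`, a linear solution map `S(η)` with `l(H)·S(η)φ = φ`, the variational derivatives
`δ_{φ⃗}E(η, S(η)φ) = ρ (L_0 S(η)φ) l(H)`, `δ_φ H^IK = L_0 S(η)φ`,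
`δ_η H^IK = (1/ρ) δ_η E − (l'(H)·S(η)φ) L_0 S(η)φ`, and the chain rule
`∂_t φ = l(H)·∂_t φ⃗ + (l'(H)·φ⃗) ∂_t η` (which encodes
`l(H)·D_η S(η)[η̇]φ + (l'(H)·S(η)φ) η̇ = 0`), the tuple `(η, φ⃗)` with `φ⃗ = S(η)φ`
solves the block system `[0, −l^T; l, 0] ∂_t(η, φ⃗) = (1/ρ)(δ_η E, δ_{φ⃗} E)` if and only if
`(η, φ)` solves Hamilton's canonical equations `∂_t η = δ_φ H^IK`, `∂_t φ = −δ_η H^IK`. -/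
theorem stmt8 {N : ℕ} (F : Type*) [CommRing F] [Algebra ℝ F]
    (ρ : ℝ) (hρ : 0 < ρ)
    (l l' : Fin (N + 1) → F) (hl0 : l 0 = 1)
    (S : F →ₗ[ℝ] (Fin (N + 1) → F))
    (hS : ∀ ψ : F, ∑ i, l i * S ψ i = ψ)
    (φ : F)
    (L0Sφ : F)                     -- the field `L_0(H,b) S(η)φ`
    (deltaEφ : Fin (N + 1) → F)    -- `δ_{φ⃗} E(η, S(η)φ)`
    (deltaEη : F)                  -- `δ_η E(η, S(η)φ)`
    (deltaHφ deltaHη : F)          -- variational derivatives of `H^IK`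
    (hii : ∀ i, deltaEφ i = ρ • (L0Sφ * l i))
    (hiii₁ : deltaHφ = L0Sφ)
    (hiii₂ : deltaHη = ρ⁻¹ • deltaEη - (∑ i, l' i * S φ i) * L0Sφ)
    (ηdot φdot : F) (φvecdot : Fin (N + 1) → F)
    (hchain : φdot = ∑ i, l i * φvecdot i + (∑ i, l' i * S φ i) * ηdot) :
    ((∀ i, l i * ηdot = ρ⁻¹ • deltaEφ i) ∧
        -(∑ i, l i * φvecdot i) = ρ⁻¹ • deltaEη)
      ↔ (ηdot = deltaHφ ∧ φdot = -deltaHη) :=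
  stmt8_general F ρ hρ l l' hl0 S φ L0Sφ deltaEφ deltaEη deltaHφ deltaHη hii hiii₁ hiii₂ ηdot φdot
    φvecdot hchain
end

section
/- Let u = (u_0,...,u_M) extend v = (v_0,...,v_N) with M > N, in the sense that one compares Q(u) = Σ_{i,j=0}^M a_{ij}(u_j, u_i) and Q'(v) = Σ_{i,j=0}^N a_{ij}(v_j, v_i) for a symmetric array of real bilinear pairings a_{ij}, and set w_j = v_j − u_j for 0 ≤ j ≤ N. Suppose that Σ_{j=0}^M a_{ij}(u_j, ·) = c_i Σ_{j=0}^M a_{0j}(u_j, ·) and Σ_{j=0}^N a_{ij}(v_j, ·) = c_i Σ_{j=0}^N a_{0j}(v_j, ·) for weights c_i (i.e., both tuples satisfy the compatibility conditions), and that the Σ_j c_j u_j-trace equals the Σ_j c_j v_j-trace. Then Q(u) − Q'(v) = Σ_{j=0}^{N} Σ_{i=N+1}^{M} (a_{ij} − c_i a_{0j})(w_j, u_i) − Σ_{j=N+1}^{M} Σ_{i=N+1}^{M} (a_{ij} − c_i a_{0j})(u_j, u_i). -/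
open scoped BigOperators

/-- Abstract algebraic identity behind the consistency estimate: let `a i j` be a symmetric
array of bilinear pairings (`a i j x y = a j i y x`), `c i` scalar weights, and suppose the
tuples `u = (u_0, …, u_M)` and `v = (v_0, …, v_N)` (with `N < M`) both satisfy the
compatibility conditions `Σ_j a_{ij}(u_j, ·) = c_i Σ_j a_{0j}(u_j, ·)` (resp. for `v`), and
share the same trace `Σ_j c_j • u_j = Σ_j c_j • v_j`. Then, with `w_j = v_j − u_j`,
`Q(u) − Q'(v) = Σ_{j=0}^{N} Σ_{i=N+1}^{M} (a_{ij} − c_i a_{0j})(w_j, u_i)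
  − Σ_{j=N+1}^{M} Σ_{i=N+1}^{M} (a_{ij} − c_i a_{0j})(u_j, u_i)`. -/
theorem stmt18 {V : Type*} [AddCommGroup V] [Module ℝ V]
    (M N : ℕ) (hMN : N < M)
    (a : ℕ → ℕ → V →ₗ[ℝ] V →ₗ[ℝ] ℝ)
    (hsymm : ∀ i j x y, a i j x y = a j i y x)
    (c : ℕ → ℝ)
    (u v w : ℕ → V)
    (hu : ∀ i ≤ M, ∀ y,
      ∑ j ∈ Finset.range (M + 1), a i j (u j) y
        = c i * ∑ j ∈ Finset.range (M + 1), a 0 j (u j) y)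
    (hv : ∀ i ≤ N, ∀ y,
      ∑ j ∈ Finset.range (N + 1), a i j (v j) y
        = c i * ∑ j ∈ Finset.range (N + 1), a 0 j (v j) y)
    (htrace : ∑ j ∈ Finset.range (M + 1), c j • u j = ∑ j ∈ Finset.range (N + 1), c j • v j)
    (hw : ∀ j, w j = v j - u j) :
    (∑ i ∈ Finset.range (M + 1), ∑ j ∈ Finset.range (M + 1), a i j (u j) (u i))
        - (∑ i ∈ Finset.range (N + 1), ∑ j ∈ Finset.range (N + 1), a i j (v j) (v i))
      = (∑ j ∈ Finset.range (N + 1), ∑ i ∈ Finset.Icc (N + 1) M,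
            (a i j (w j) (u i) - c i * a 0 j (w j) (u i)))
        - (∑ j ∈ Finset.Icc (N + 1) M, ∑ i ∈ Finset.Icc (N + 1) M,
            (a i j (u j) (u i) - c i * a 0 j (u j) (u i))) := by
  have hsplit : ∀ f : ℕ → ℝ, (∑ j ∈ Finset.range (M + 1), f j)
      = (∑ j ∈ Finset.range (N + 1), f j) + ∑ j ∈ Finset.Icc (N + 1) M, f j := by
    intro f
    rw [Finset.range_eq_Ico,
      ← Finset.sum_Ico_consecutive f (Nat.zero_le (N + 1)) (by omega : N + 1 ≤ M + 1),
      ← Finset.range_eq_Ico, Finset.Ico_add_one_right_eq_Icc]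
  set R1 := Finset.range (M + 1) with hR1
  set R2 := Finset.range (N + 1) with hR2
  set I := Finset.Icc (N + 1) M with hI
  have hmemR1 : ∀ i ∈ R1, i ≤ M := fun i hi => by
    simpa [hR1, Nat.lt_succ_iff] using Finset.mem_range.mp hi
  have hmemR2 : ∀ i ∈ R2, i ≤ N := fun i hi => by
    simpa [hR2, Nat.lt_succ_iff] using Finset.mem_range.mp hi
  set s : V := ∑ j ∈ R1, c j • u j with hs
  have hs2 : s = ∑ j ∈ R2, c j • v j := htrace
  have happ : ∀ φ : V →ₗ[ℝ] ℝ, φ s = ∑ i ∈ R1, c i * φ (u i) := by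
    intro φ
    rw [hs, map_sum]
    exact Finset.sum_congr rfl fun i _ => by rw [map_smul, smul_eq_mul]
  have happ' : ∀ φ : V →ₗ[ℝ] ℝ, φ s = ∑ i ∈ R2, c i * φ (v i) := by
    intro φ
    rw [hs2, map_sum]
    exact Finset.sum_congr rfl fun i _ => by rw [map_smul, smul_eq_mul]
  -- abbreviations
  set Qu := ∑ i ∈ R1, ∑ j ∈ R1, a i j (u j) (u i) with hQudef
  set Qv := ∑ i ∈ R2, ∑ j ∈ R2, a i j (v j) (v i) with hQvdef
  set A1 := ∑ i ∈ R2, ∑ j ∈ R2, a i j (w j) (u i) with hA1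
  set A2 := ∑ i ∈ I, ∑ j ∈ R2, a i j (w j) (u i) with hA2
  set B1 := ∑ i ∈ R2, ∑ j ∈ I, a i j (u j) (u i) with hB1
  set B2 := ∑ i ∈ I, ∑ j ∈ I, a i j (u j) (u i) with hB2
  set C1 := ∑ i ∈ R2, ∑ j ∈ R2, c i * a 0 j (w j) (u i) with hC1
  set C2 := ∑ i ∈ I, ∑ j ∈ R2, c i * a 0 j (w j) (u i) with hC2
  set D1 := ∑ i ∈ R2, ∑ j ∈ I, c i * a 0 j (u j) (u i) with hD1
  set D2 := ∑ i ∈ I, ∑ j ∈ I, c i * a 0 j (u j) (u i) with hD2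
  -- first-argument linearity: a i j (v j) x - a i j (u j) x = a i j (w j) x
  have hwdiff : ∀ i j x, a i j (v j) x - a i j (u j) x = a i j (w j) x := by
    intro i j x
    rw [hw j, map_sub, LinearMap.sub_apply]
  -- Q(u) = T s
  have hQu : Qu = ∑ j ∈ R1, a 0 j (u j) s := by
    calc Qu = ∑ i ∈ R1, c i * ∑ j ∈ R1, a 0 j (u j) (u i) :=
          Finset.sum_congr rfl fun i hi => hu i (hmemR1 i hi) (u i)
      _ = ∑ i ∈ R1, ∑ j ∈ R1, c i * a 0 j (u j) (u i) :=
          Finset.sum_congr rfl fun i _ => Finset.mul_sum _ _ _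
      _ = ∑ j ∈ R1, ∑ i ∈ R1, c i * a 0 j (u j) (u i) := Finset.sum_comm
      _ = ∑ j ∈ R1, a 0 j (u j) s :=
          Finset.sum_congr rfl fun j _ => (happ (a 0 j (u j))).symm
  -- Q'(v) = T' s
  have hQv : Qv = ∑ j ∈ R2, a 0 j (v j) s := by
    calc Qv = ∑ i ∈ R2, c i * ∑ j ∈ R2, a 0 j (v j) (v i) :=
          Finset.sum_congr rfl fun i hi => hv i (hmemR2 i hi) (v i)
      _ = ∑ i ∈ R2, ∑ j ∈ R2, c i * a 0 j (v j) (v i) :=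
          Finset.sum_congr rfl fun i _ => Finset.mul_sum _ _ _
      _ = ∑ j ∈ R2, ∑ i ∈ R2, c i * a 0 j (v j) (v i) := Finset.sum_comm
      _ = ∑ j ∈ R2, a 0 j (v j) s :=
          Finset.sum_congr rfl fun j _ => (happ' (a 0 j (v j))).symm
  -- key identity via symmetry: ∑_{i∈R1} ∑_{j∈R2} a i j (v j) (u i) = T s
  have hKey : (∑ i ∈ R1, ∑ j ∈ R2, a i j (v j) (u i)) = ∑ j ∈ R1, a 0 j (u j) s := by
    calc (∑ i ∈ R1, ∑ j ∈ R2, a i j (v j) (u i))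
        = ∑ i ∈ R1, ∑ j ∈ R2, a j i (u i) (v j) :=
          Finset.sum_congr rfl fun i _ => Finset.sum_congr rfl fun j _ => hsymm i j _ _
      _ = ∑ j ∈ R2, ∑ i ∈ R1, a j i (u i) (v j) := Finset.sum_comm
      _ = ∑ j ∈ R2, c j * ∑ i ∈ R1, a 0 i (u i) (v j) :=
          Finset.sum_congr rfl fun j hj => hu j (le_trans (hmemR2 j hj) hMN.le) (v j)
      _ = ∑ j ∈ R2, ∑ i ∈ R1, c j * a 0 i (u i) (v j) :=
          Finset.sum_congr rfl fun j _ => Finset.mul_sum _ _ _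
      _ = ∑ i ∈ R1, ∑ j ∈ R2, c j * a 0 i (u i) (v j) := Finset.sum_comm
      _ = ∑ i ∈ R1, a 0 i (u i) s :=
          Finset.sum_congr rfl fun i _ => (happ' (a 0 i (u i))).symm
  -- (E1) : Qu - Qv = -C1 - C2 + D1 + D2
  have hE1 : Qu - Qv = -C1 - C2 + D1 + D2 := by
    have h1 : Qu = (∑ j ∈ R2, a 0 j (u j) s) + ∑ j ∈ I, a 0 j (u j) s := by
      rw [hQu]; exact hsplit _
    have h2 : (∑ j ∈ R2, a 0 j (v j) s) - ∑ j ∈ R2, a 0 j (u j) s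
        = ∑ j ∈ R2, a 0 j (w j) s := by
      rw [← Finset.sum_sub_distrib]
      exact Finset.sum_congr rfl fun j _ => hwdiff 0 j s
    have h3 : (∑ j ∈ R2, a 0 j (w j) s) = C1 + C2 := by
      calc (∑ j ∈ R2, a 0 j (w j) s)
          = ∑ j ∈ R2, ∑ i ∈ R1, c i * a 0 j (w j) (u i) :=
            Finset.sum_congr rfl fun j _ => happ (a 0 j (w j))
        _ = ∑ i ∈ R1, ∑ j ∈ R2, c i * a 0 j (w j) (u i) := Finset.sum_comm
        _ = C1 + C2 := hsplit _
    have h4 : (∑ j ∈ I, a 0 j (u j) s) = D1 + D2 := by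
      calc (∑ j ∈ I, a 0 j (u j) s)
          = ∑ j ∈ I, ∑ i ∈ R1, c i * a 0 j (u j) (u i) :=
            Finset.sum_congr rfl fun j _ => happ (a 0 j (u j))
        _ = ∑ i ∈ R1, ∑ j ∈ I, c i * a 0 j (u j) (u i) := Finset.sum_comm
        _ = D1 + D2 := hsplit _
    have h5 : Qv = ∑ j ∈ R2, a 0 j (v j) s := hQv
    linarith [h1, h2, h3, h4, h5]
  -- (E2) : B1 - A1 = D1 - C1
  have hE2 : B1 - A1 = D1 - C1 := by
    have key_i : ∀ i ∈ R2,
        (∑ j ∈ I, a i j (u j) (u i)) - (∑ j ∈ R2, a i j (w j) (u i))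
          = c i * ((∑ j ∈ I, a 0 j (u j) (u i)) - ∑ j ∈ R2, a 0 j (w j) (u i)) := by
      intro i hi
      have h1 := hu i (le_trans (hmemR2 i hi) hMN.le) (u i)
      have h2 := hv i (hmemR2 i hi) (u i)
      have h3 := hsplit (fun j => a i j (u j) (u i))
      have h4 := hsplit (fun j => a 0 j (u j) (u i))
      have h5 : (∑ j ∈ R2, a i j (w j) (u i))
          = (∑ j ∈ R2, a i j (v j) (u i)) - ∑ j ∈ R2, a i j (u j) (u i) := by
        rw [← Finset.sum_sub_distrib]
        exact (Finset.sum_congr rfl fun j _ => hwdiff i j (u i)).symm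
      have h6 : (∑ j ∈ R2, a 0 j (w j) (u i))
          = (∑ j ∈ R2, a 0 j (v j) (u i)) - ∑ j ∈ R2, a 0 j (u j) (u i) := by
        rw [← Finset.sum_sub_distrib]
        exact (Finset.sum_congr rfl fun j _ => hwdiff 0 j (u i)).symm
      linear_combination h1 - h2 - h3 - h5 + c i * h4 + c i * h6
    calc B1 - A1 = ∑ i ∈ R2, ((∑ j ∈ I, a i j (u j) (u i)) - ∑ j ∈ R2, a i j (w j) (u i)) := by
          rw [Finset.sum_sub_distrib]
      _ = ∑ i ∈ R2, c i * ((∑ j ∈ I, a 0 j (u j) (u i)) - ∑ j ∈ R2, a 0 j (w j) (u i)) :=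
          Finset.sum_congr rfl key_i
      _ = ∑ i ∈ R2, ((∑ j ∈ I, c i * a 0 j (u j) (u i)) - ∑ j ∈ R2, c i * a 0 j (w j) (u i)) := by
          refine Finset.sum_congr rfl fun i _ => ?_
          rw [mul_sub, Finset.mul_sum, Finset.mul_sum]
      _ = D1 - C1 := by rw [Finset.sum_sub_distrib]
  -- (E3) : A1 + A2 = B1 + B2
  have hE3 : A1 + A2 = B1 + B2 := by
    have h1 : A1 + A2 = ∑ i ∈ R1, ∑ j ∈ R2, a i j (w j) (u i) :=
      (hsplit (fun i => ∑ j ∈ R2, a i j (w j) (u i))).symm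
    have h2 : (∑ i ∈ R1, ∑ j ∈ R2, a i j (w j) (u i))
        = (∑ i ∈ R1, ∑ j ∈ R2, a i j (v j) (u i)) - ∑ i ∈ R1, ∑ j ∈ R2, a i j (u j) (u i) := by
      rw [← Finset.sum_sub_distrib]
      refine Finset.sum_congr rfl fun i _ => ?_
      rw [← Finset.sum_sub_distrib]
      exact (Finset.sum_congr rfl fun j _ => hwdiff i j (u i)).symm
    have h3 : Qu = (∑ i ∈ R1, ∑ j ∈ R2, a i j (u j) (u i))
        + ∑ i ∈ R1, ∑ j ∈ I, a i j (u j) (u i) := by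
      rw [hQudef, ← Finset.sum_add_distrib]
      exact Finset.sum_congr rfl fun i _ => hsplit (fun j => a i j (u j) (u i))
    have h4 : (∑ i ∈ R1, ∑ j ∈ I, a i j (u j) (u i)) = B1 + B2 :=
      hsplit (fun i => ∑ j ∈ I, a i j (u j) (u i))
    have h5 : (∑ i ∈ R1, ∑ j ∈ R2, a i j (v j) (u i)) = Qu := by rw [hKey, ← hQu]
    linarith [h1, h2, h3, h4, h5]
  -- assemble the goal
  have hrhs1 : (∑ j ∈ R2, ∑ i ∈ I, (a i j (w j) (u i) - c i * a 0 j (w j) (u i)))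
      = A2 - C2 := by
    calc (∑ j ∈ R2, ∑ i ∈ I, (a i j (w j) (u i) - c i * a 0 j (w j) (u i)))
        = (∑ j ∈ R2, ∑ i ∈ I, a i j (w j) (u i))
            - ∑ j ∈ R2, ∑ i ∈ I, c i * a 0 j (w j) (u i) := by
          simp [Finset.sum_sub_distrib]
      _ = A2 - C2 := by
          rw [hA2, hC2]
          exact congrArg₂ _ Finset.sum_comm Finset.sum_comm
  have hrhs2 : (∑ j ∈ I, ∑ i ∈ I, (a i j (u j) (u i) - c i * a 0 j (u j) (u i)))
      = B2 - D2 := by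
    calc (∑ j ∈ I, ∑ i ∈ I, (a i j (u j) (u i) - c i * a 0 j (u j) (u i)))
        = (∑ j ∈ I, ∑ i ∈ I, a i j (u j) (u i))
            - ∑ j ∈ I, ∑ i ∈ I, c i * a 0 j (u j) (u i) := by
          simp [Finset.sum_sub_distrib]
      _ = B2 - D2 := by
          rw [hB2, hD2]
          exact congrArg₂ _ Finset.sum_comm Finset.sum_comm
  rw [hrhs1, hrhs2]
  linarith [hE1, hE2, hE3]
end
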